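/- arXiv:2401.05550 — 3 statements merged into one kernel-verified Lean document; each statement's English description precedes it below -/
import Mathlib

section
/- Failure of L^r(L^s)-integrability for the self-similar profile: let d ≥ 1, r, s ∈ (1,∞) and μ > 0 with 2/r + d/s < μ, let w : ℝ^d → ℂ be measurable with ‖w‖_{L^s(B_1)} > 0 (possibly +∞), and define ζ(t,x) = (1−t)^{−μ/2} e^{−(i/2) log(1−t)} w(x/(1−t)^{1/2}) for t ∈ [0,1). Then ∫_{1/2}^{1} (t ‖ζ(t,·)‖_{L^s(B_1)})^r dt = ∞. In particular, if η : ℝ^d → [0,1] is measurable with η = 1 on B_1 and u(t,x) = t ζ(t,x) η(x), then ∫₀¹ ‖u(t,·)‖_{L^s(ℝ^d)}^r dt = ∞. -/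
open MeasureTheory Set
open scoped ENNReal NNReal

/-!
The phase factor of `ζ` has modulus one, and the substitution `x ↦ (1-t)^{1/2} x` shrinks `B_1`
into itself, so `‖ζ(t,·)‖_{L^s(B_1)} ≥ (1-t)^{d/(2s) - μ/2} ‖w‖_{L^s(B_1)}`. The `r`-th power of
the time integrand is therefore bounded below near `t = 1` by a positive multiple of
`(1-t)^{(d/(2s) - μ/2) r}`, and `2/r + d/s < μ` makes this exponent less than `-1`, so it is not
integrable. Since `η = 1` on `B_1`, the full `L^s` norm of `u(t,·)` dominates
`t ‖ζ(t,·)‖_{L^s(B_1)}`.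
-/

/-- The self-similar profile `ζ(t,x) = (1-t)^{-μ/2} e^{-(i/2) log(1-t)} w(x/(1-t)^{1/2})`. -/
noncomputable def selfSimilar {d : ℕ} (μ : ℝ) (w : EuclideanSpace ℝ (Fin d) → ℂ)
    (t : ℝ) (x : EuclideanSpace ℝ (Fin d)) : ℂ :=
  (((1 - t) ^ (-μ / 2) : ℝ) : ℂ) * Complex.exp (-(Complex.I / 2) * (Real.log (1 - t) : ℂ)) *
    w ((((1 - t) ^ ((1 : ℝ) / 2))⁻¹ : ℝ) • x)

theorem lintegral_Ioo_one_sub_rpow_eq_top {c a : ℝ} (hc : c < 1) (ha : a ≤ -1) :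
    ∫⁻ t in Ioo c 1, ENNReal.ofReal ((1 - t) ^ a) = ∞ := by
  have hpre : (fun t : ℝ => 1 - t) ⁻¹' Ioo 0 (1 - c) = Ioo c 1 := by
    ext t; simp only [mem_preimage, mem_Ioo]; constructor <;> intro h <;> constructor <;> linarith
  rw [← hpre, (Measure.measurePreserving_sub_left volume 1).setLIntegral_comp_preimage_emb
    (Homeomorph.subLeft 1).measurableEmbedding (fun u => ENNReal.ofReal (u ^ a))]
  have hnonint : ¬ IntegrableOn (fun u : ℝ => u ^ a) (Ioo 0 (1 - c)) := by
    rw [intervalIntegral.integrableOn_Ioo_rpow_iff (by linarith)]; linarith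
  by_contra hfin
  refine hnonint ((lintegral_ofReal_ne_top_iff_integrable ?_ ?_).1 hfin)
  · exact (measurable_id.pow_const a).aestronglyMeasurable
  · filter_upwards [ae_restrict_mem measurableSet_Ioo] with u hu
    exact Real.rpow_nonneg hu.1.le a

theorem lintegral_Ioo_eq_top_of_one_sub_rpow_le {c a : ℝ} {K : ℝ≥0∞} {f : ℝ → ℝ≥0∞}
    (hc : c < 1) (ha : a ≤ -1) (hK : K ≠ 0)
    (hf : ∀ t ∈ Ioo c 1, K * ENNReal.ofReal ((1 - t) ^ a) ≤ f t) :
    ∫⁻ t in Ioo c 1, f t = ∞ := by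
  refine eq_top_iff.2 (le_of_eq_of_le ?_ (setLIntegral_mono' measurableSet_Ioo hf))
  rw [lintegral_const_mul K (by fun_prop), lintegral_Ioo_one_sub_rpow_eq_top hc ha,
    ENNReal.mul_top hK]

section Scaling

variable {E : Type*} [NormedAddCommGroup E] [NormedSpace ℝ E] [MeasurableSpace E] [BorelSpace E]
  [FiniteDimensional ℝ E] (μ : Measure E) [μ.IsAddHaarMeasure]

theorem setLIntegral_ball_comp_inv_smul (g : E → ℝ≥0∞) {l : ℝ} (hl : 0 < l) :
    ∫⁻ x in Metric.ball 0 l, g (l⁻¹ • x) ∂μ =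
      ENNReal.ofReal (l ^ Module.finrank ℝ E) * ∫⁻ x in Metric.ball 0 1, g x ∂μ := by
  have hpre : (l⁻¹ • · : E → E) ⁻¹' Metric.ball 0 1 = Metric.ball 0 l := by
    ext x
    simp only [mem_preimage, mem_ball_zero_iff, norm_smul, norm_inv, Real.norm_eq_abs,
      abs_of_pos hl, inv_mul_lt_iff₀ hl, mul_one]
  have hemb : MeasurableEmbedding (l⁻¹ • · : E → E) :=
    (Homeomorph.smulOfNeZero l⁻¹ (inv_ne_zero hl.ne')).measurableEmbedding
  rw [← hpre, ← hemb.lintegral_map g, ← hemb.restrict_map,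
    Measure.map_addHaar_smul μ (inv_ne_zero hl.ne'), Measure.restrict_smul,
    lintegral_smul_measure, inv_pow, inv_inv, abs_of_pos (pow_pos hl _), smul_eq_mul]

theorem le_setLIntegral_ball_comp_inv_smul (g : E → ℝ≥0∞) {l : ℝ} (hl : 0 < l) (hl1 : l ≤ 1) :
    ENNReal.ofReal (l ^ Module.finrank ℝ E) * ∫⁻ x in Metric.ball 0 1, g x ∂μ ≤
      ∫⁻ x in Metric.ball 0 1, g (l⁻¹ • x) ∂μ := by
  rw [← setLIntegral_ball_comp_inv_smul μ g hl]
  exact lintegral_mono_set (Metric.ball_subset_ball hl1)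

end Scaling

theorem Complex.enorm_ofReal_of_nonneg {x : ℝ} (hx : 0 ≤ x) : ‖(x : ℂ)‖ₑ = ENNReal.ofReal x := by
  rw [← ofReal_norm, Complex.norm_real, Real.norm_of_nonneg hx]

theorem enorm_selfSimilar {d : ℕ} (μ : ℝ) (w : EuclideanSpace ℝ (Fin d) → ℂ) {t : ℝ} (ht : t ≤ 1)
    (x : EuclideanSpace ℝ (Fin d)) :
    ‖selfSimilar μ w t x‖ₑ =
      ENNReal.ofReal ((1 - t) ^ (-μ / 2)) * ‖w (((1 - t) ^ ((1 : ℝ) / 2))⁻¹ • x)‖ₑ := by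
  have hphase : ‖Complex.exp (-(Complex.I / 2) * (Real.log (1 - t) : ℂ))‖ₑ = 1 := by
    rw [← ofReal_norm, Complex.norm_exp]
    simp [Complex.mul_re]
  rw [selfSimilar, enorm_mul, enorm_mul, hphase, mul_one,
    Complex.enorm_ofReal_of_nonneg (Real.rpow_nonneg (by linarith) _)]

theorem le_setLIntegral_ball_selfSimilar {d : ℕ} (μ : ℝ) (w : EuclideanSpace ℝ (Fin d) → ℂ)
    {s t : ℝ} (hs : 0 ≤ s) (ht0 : 0 ≤ t) (ht1 : t < 1) :
    ENNReal.ofReal ((1 - t) ^ (d / 2 - μ * s / 2)) *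
        ∫⁻ x in Metric.ball 0 1, ‖w x‖ₑ ^ s ≤
      ∫⁻ x in Metric.ball 0 1, ‖selfSimilar μ w t x‖ₑ ^ s := by
  have hb : 0 < 1 - t := by linarith
  set l := (1 - t) ^ ((1 : ℝ) / 2)
  have hl : 0 < l := Real.rpow_pos_of_pos hb _
  have hl1 : l ≤ 1 := Real.rpow_le_one hb.le (by linarith) (by norm_num)
  have hfactor : ENNReal.ofReal ((1 - t) ^ (d / 2 - μ * s / 2)) =
      ENNReal.ofReal ((1 - t) ^ (-μ / 2)) ^ s * ENNReal.ofReal (l ^ d) := by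
    rw [ENNReal.ofReal_rpow_of_nonneg (Real.rpow_nonneg hb.le _) hs, ← ENNReal.ofReal_mul
      (Real.rpow_nonneg (Real.rpow_nonneg hb.le _) _), ← Real.rpow_natCast, ← Real.rpow_mul hb.le,
      ← Real.rpow_mul hb.le, ← Real.rpow_add hb]
    ring_nf
  simp_rw [enorm_selfSimilar μ w ht1.le, ENNReal.mul_rpow_of_nonneg _ _ hs]
  rw [lintegral_const_mul' _ _ (ENNReal.rpow_ne_top_of_nonneg hs ENNReal.ofReal_ne_top),
    hfactor, mul_assoc]
  gcongr
  simpa only [finrank_euclideanSpace_fin] using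
    le_setLIntegral_ball_comp_inv_smul volume (fun x => ‖w x‖ₑ ^ s) hl hl1

theorem le_lpNorm_ball_selfSimilar {d : ℕ} (μ : ℝ) (w : EuclideanSpace ℝ (Fin d) → ℂ)
    {s t : ℝ} (hs : 0 < s) (ht0 : 0 ≤ t) (ht1 : t < 1) :
    ENNReal.ofReal ((1 - t) ^ (d / (2 * s) - μ / 2)) *
        (∫⁻ x in Metric.ball 0 1, ‖w x‖ₑ ^ s) ^ (1 / s) ≤
      (∫⁻ x in Metric.ball 0 1, ‖selfSimilar μ w t x‖ₑ ^ s) ^ (1 / s) := by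
  have hexp : ENNReal.ofReal ((1 - t) ^ (d / (2 * s) - μ / 2)) =
      ENNReal.ofReal ((1 - t) ^ (d / 2 - μ * s / 2)) ^ (1 / s) := by
    rw [ENNReal.ofReal_rpow_of_nonneg (Real.rpow_nonneg (by linarith) _) (by positivity),
      ← Real.rpow_mul (by linarith)]
    congr 2
    field_simp
  rw [hexp, ← ENNReal.mul_rpow_of_nonneg _ _ (by positivity)]
  gcongr
  exact le_setLIntegral_ball_selfSimilar μ w hs.le ht0 ht1

theorem le_ofReal_mul_lpNorm_ball_selfSimilar_rpow {d : ℕ} (μ : ℝ)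
    (w : EuclideanSpace ℝ (Fin d) → ℂ) {r s t : ℝ} (hr : 0 ≤ r) (hs : 0 < s)
    (ht : t ∈ Ioo (1 / 2 : ℝ) 1) :
    (ENNReal.ofReal (1 / 2) * (∫⁻ x in Metric.ball 0 1, ‖w x‖ₑ ^ s) ^ (1 / s)) ^ r *
        ENNReal.ofReal ((1 - t) ^ ((d / (2 * s) - μ / 2) * r)) ≤
      (ENNReal.ofReal t * (∫⁻ x in Metric.ball 0 1, ‖selfSimilar μ w t x‖ₑ ^ s) ^ (1 / s)) ^ r := by
  have hb : 0 ≤ 1 - t := by linarith [ht.2]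
  rw [Real.rpow_mul hb, ← ENNReal.ofReal_rpow_of_nonneg (Real.rpow_nonneg hb _) hr,
    ← ENNReal.mul_rpow_of_nonneg _ _ hr, mul_assoc]
  gcongr (?_ * ?_) ^ r
  · exact ENNReal.ofReal_le_ofReal ht.1.le
  · rw [mul_comm]
    exact le_lpNorm_ball_selfSimilar μ w hs (by linarith [ht.1]) ht.2

theorem ofReal_mul_lpNorm_le_lpNorm_mul_cutoff {E : Type*} [MeasurableSpace E] {ν : Measure E}
    {B : Set E} (hB : MeasurableSet B) (f : E → ℂ) {η : E → ℝ} (hη : ∀ x ∈ B, η x = 1)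
    {s t : ℝ} (hs : 0 < s) (ht : 0 ≤ t) :
    ENNReal.ofReal t * (∫⁻ x in B, ‖f x‖ₑ ^ s ∂ν) ^ (1 / s) ≤
      (∫⁻ x, ‖(t : ℂ) * f x * (η x : ℂ)‖ₑ ^ s ∂ν) ^ (1 / s) := by
  have hcoef : ENNReal.ofReal t = (ENNReal.ofReal t ^ s) ^ (1 / s) := by
    rw [← ENNReal.rpow_mul, mul_one_div_cancel hs.ne', ENNReal.rpow_one]
  rw [hcoef, ← ENNReal.mul_rpow_of_nonneg _ _ (by positivity),
    ← lintegral_const_mul' _ _ (ENNReal.rpow_ne_top_of_nonneg hs.le ENNReal.ofReal_ne_top)]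
  refine ENNReal.rpow_le_rpow ?_ (by positivity)
  calc ∫⁻ x in B, ENNReal.ofReal t ^ s * ‖f x‖ₑ ^ s ∂ν
      = ∫⁻ x in B, ‖(t : ℂ) * f x * (η x : ℂ)‖ₑ ^ s ∂ν := by
        refine setLIntegral_congr_fun hB fun x hx => ?_
        rw [hη x hx, Complex.ofReal_one, mul_one, enorm_mul, Complex.enorm_ofReal_of_nonneg ht,
          ENNReal.mul_rpow_of_nonneg _ _ hs.le]
    _ ≤ ∫⁻ x, ‖(t : ℂ) * f x * (η x : ℂ)‖ₑ ^ s ∂ν := setLIntegral_le_lintegral _ _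

theorem failure_LrLs_selfSimilar_general (d : ℕ) (r s μ : ℝ)
    (hr : 1 < r) (hs : 1 < s) (hcond : 2 / r + (d : ℝ) / s < μ)
    (w : EuclideanSpace ℝ (Fin d) → ℂ)
    (hwpos : 0 < ∫⁻ x in Metric.ball (0 : EuclideanSpace ℝ (Fin d)) 1, (‖w x‖₊ : ℝ≥0∞) ^ s) :
    (∫⁻ t in Ioo (1 / 2 : ℝ) 1,
        (ENNReal.ofReal t *
          (∫⁻ x in Metric.ball (0 : EuclideanSpace ℝ (Fin d)) 1,
            (‖selfSimilar μ w t x‖₊ : ℝ≥0∞) ^ s) ^ (1 / s)) ^ r) = ∞ ∧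
    ∀ η : EuclideanSpace ℝ (Fin d) → ℝ, Measurable η → (∀ x, η x ∈ Icc (0 : ℝ) 1) →
      (∀ x ∈ Metric.ball (0 : EuclideanSpace ℝ (Fin d)) 1, η x = 1) →
      (∫⁻ t in Ioo (0 : ℝ) 1,
        (∫⁻ x, (‖(t : ℂ) * selfSimilar μ w t x * (η x : ℂ)‖₊ : ℝ≥0∞) ^ s) ^ (r / s)) = ∞ := by
  simp only [← enorm_eq_nnnorm] at hwpos ⊢
  have hr0 : 0 < r := by linarith
  have hs0 : 0 < s := by linarith
  have hexp : (d / (2 * s) - μ / 2) * r ≤ -1 := by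
    have hfactor : (d / (2 * s) - μ / 2) * r = -(r / 2) * (μ - d / s) := by ring
    have hgap : 1 < r / 2 * (μ - d / s) := by
      calc (1 : ℝ) = r / 2 * (2 / r) := by field_simp
        _ < r / 2 * (μ - d / s) := by gcongr; linarith
    linarith
  have hK : (ENNReal.ofReal (1 / 2) * (∫⁻ x in Metric.ball 0 1, ‖w x‖ₑ ^ s) ^ (1 / s)) ^ r ≠ 0 := by
    simp [ENNReal.rpow_eq_zero_iff, hwpos.ne', hr0, hs0, hr0.le, hs0.le]
  have hball := lintegral_Ioo_eq_top_of_one_sub_rpow_le (by norm_num) hexp hK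
    fun t ht => le_ofReal_mul_lpNorm_ball_selfSimilar_rpow μ w hr0.le hs0 ht
  refine ⟨hball, fun η _ _ hη => eq_top_iff.2 (hball.symm.le.trans ?_)⟩
  calc _ ≤ ∫⁻ t in Ioo (1 / 2 : ℝ) 1,
        (∫⁻ x, ‖(t : ℂ) * selfSimilar μ w t x * (η x : ℂ)‖ₑ ^ s) ^ (r / s) := by
        refine setLIntegral_mono' measurableSet_Ioo fun t ht => ?_
        rw [div_eq_mul_one_div r s, mul_comm r, ENNReal.rpow_mul]
        gcongr
        exact ofReal_mul_lpNorm_le_lpNorm_mul_cutoff measurableSet_ball _ hη hs0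
          (by linarith [ht.1])
    _ ≤ _ := lintegral_mono_set (Ioo_subset_Ioo_left (by norm_num))

/-- Failure of `L^r(L^s)`-integrability for the self-similar profile: if `2/r + d/s < μ` and
`‖w‖_{L^s(B_1)} > 0`, then `∫_{1/2}^1 (t ‖ζ(t,·)‖_{L^s(B_1)})^r dt = ∞`; in particular, for any
cut-off `η : ℝ^d → [0,1]` with `η = 1` on `B_1` and `u(t,x) = t ζ(t,x) η(x)` one has
`∫_0^1 ‖u(t,·)‖_{L^s(ℝ^d)}^r dt = ∞`. -/
theorem failure_LrLs_selfSimilar (d : ℕ) (hd : 1 ≤ d) (r s μ : ℝ)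
    (hr : 1 < r) (hs : 1 < s) (hμ : 0 < μ) (hcond : 2 / r + (d : ℝ) / s < μ)
    (w : EuclideanSpace ℝ (Fin d) → ℂ) (hw : Measurable w)
    (hwpos : 0 < ∫⁻ x in Metric.ball (0 : EuclideanSpace ℝ (Fin d)) 1, (‖w x‖₊ : ℝ≥0∞) ^ s) :
    (∫⁻ t in Ioo (1 / 2 : ℝ) 1,
        (ENNReal.ofReal t *
          (∫⁻ x in Metric.ball (0 : EuclideanSpace ℝ (Fin d)) 1,
            (‖selfSimilar μ w t x‖₊ : ℝ≥0∞) ^ s) ^ (1 / s)) ^ r) = ∞ ∧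
    ∀ η : EuclideanSpace ℝ (Fin d) → ℝ, Measurable η → (∀ x, η x ∈ Icc (0 : ℝ) 1) →
      (∀ x ∈ Metric.ball (0 : EuclideanSpace ℝ (Fin d)) 1, η x = 1) →
      (∫⁻ t in Ioo (0 : ℝ) 1,
        (∫⁻ x, (‖(t : ℂ) * selfSimilar μ w t x * (η x : ℂ)‖₊ : ℝ≥0∞) ^ s) ^ (r / s)) = ∞ :=
  failure_LrLs_selfSimilar_general d r s μ hr hs hcond w hwpos
end

section
/- Uniform-in-time L² bound for the truncated solution: let d ≥ 2 and 0 < μ < d/2, and let w : ℝ^d → ℂ be measurable with |w(x)| ≤ M for |x| ≤ 1 and |w(x)| ≤ C₀ |x|^{−μ} for |x| ≥ 1, for some M, C₀ ≥ 0. Let η : ℝ^d → [0,1] be measurable with η = 0 outside B_2, and define u(t,x) = t (1−t)^{−μ/2} e^{−(i/2) log(1−t)} w(x/(1−t)^{1/2}) η(x) for t ∈ [0,1). Then sup_{t∈[0,1)} ‖u(t,·)‖_{L²(ℝ^d)} < ∞. -/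
/-!
Outside the origin the hypotheses on `w` combine into `‖w y‖ ≤ A ‖y‖^{-μ}`, and this majorant is
invariant under the self-similar rescaling: `(1-t)^{-μ/2} A ‖x/(1-t)^{1/2}‖^{-μ} = A ‖x‖^{-μ}`.
Hence `|u(t,x)| ≤ A ‖x‖^{-μ} 1_{B_2}(x)` for every `t ∈ [0,1)`, and the right-hand side is in `L²`
because `‖x‖^{-2μ}` is integrable near the origin when `2μ < d`.
-/

open MeasureTheory Set
open scoped ENNReal NNReal

open Metric

section

variable {E : Type*} [NormedAddCommGroup E] [NormedSpace ℝ E] [FiniteDimensional ℝ E]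
  [MeasurableSpace E] [BorelSpace E] {μ : Measure E} [μ.IsAddHaarMeasure]

lemma memLp_two_indicator_ball_norm_rpow (hd : 1 ≤ Module.finrank ℝ E) {α : ℝ}
    (hα : 2 * α < Module.finrank ℝ E) (A R : ℝ) :
    MemLp ((ball (0 : E) R).indicator fun x ↦ A * ‖x‖ ^ (-α)) 2 μ := by
  have hmeas : Measurable fun x : E ↦ A * ‖x‖ ^ (-α) := by fun_prop
  rw [memLp_indicator_iff_restrict measurableSet_ball,
    memLp_two_iff_integrable_sq hmeas.aestronglyMeasurable]
  refine integrableOn_ball_of_norm_le_rpow hd hα (C := A ^ 2) (ae_of_all _ fun x ↦ ?_)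
    (hmeas.pow_const 2).aestronglyMeasurable
  rw [mul_pow, ← Real.rpow_mul_natCast (norm_nonneg x), Real.norm_eq_abs,
    abs_of_nonneg (by positivity)]
  norm_num [mul_comm]

end

lemma norm_le_max_mul_norm_rpow {E F : Type*} [NormedAddCommGroup E]
    [NormedAddCommGroup F] {w : E → F} {μ M C₀ : ℝ} (hμ : 0 ≤ μ) (hM : 0 ≤ M)
    (hwM : ∀ x, ‖x‖ ≤ 1 → ‖w x‖ ≤ M) (hwdec : ∀ x, 1 ≤ ‖x‖ → ‖w x‖ ≤ C₀ * ‖x‖ ^ (-μ))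
    {x : E} (hx : x ≠ 0) :
    ‖w x‖ ≤ max M C₀ * ‖x‖ ^ (-μ) := by
  rcases le_total ‖x‖ 1 with hx1 | hx1
  · have : 1 ≤ ‖x‖ ^ (-μ) :=
      Real.one_le_rpow_of_pos_of_le_one_of_nonpos (norm_pos_iff.2 hx) hx1 (neg_nonpos.2 hμ)
    calc ‖w x‖ ≤ M := hwM x hx1
      _ ≤ max M C₀ * ‖x‖ ^ (-μ) := by nlinarith [le_max_left M C₀]
  · calc ‖w x‖ ≤ C₀ * ‖x‖ ^ (-μ) := hwdec x hx1
      _ ≤ max M C₀ * ‖x‖ ^ (-μ) := by gcongr; exact le_max_right M C₀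

lemma norm_selfSimilar_le {d : ℕ} {μ A t : ℝ} {w : EuclideanSpace ℝ (Fin d) → ℂ}
    (hw : ∀ y, y ≠ 0 → ‖w y‖ ≤ A * ‖y‖ ^ (-μ)) (ht : t < 1) {x : EuclideanSpace ℝ (Fin d)}
    (hx : x ≠ 0) :
    ‖selfSimilar μ w t x‖ ≤ A * ‖x‖ ^ (-μ) := by
  have h1t : 0 < 1 - t := sub_pos.2 ht
  set s := (1 - t) ^ ((1 : ℝ) / 2)
  have hs : 0 < s := by positivity
  have hphase : ‖Complex.exp (-(Complex.I / 2) * (Real.log (1 - t) : ℂ))‖ = 1 := by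
    rw [show -(Complex.I / 2) * (Real.log (1 - t) : ℂ) =
      ((-Real.log (1 - t) / 2 : ℝ) : ℂ) * Complex.I by push_cast; ring]
    exact Complex.norm_exp_ofReal_mul_I _
  have hscale : (1 - t) ^ (-μ / 2) * (s⁻¹ * ‖x‖) ^ (-μ) = ‖x‖ ^ (-μ) := by
    rw [Real.mul_rpow (by positivity) (norm_nonneg x), Real.inv_rpow hs.le,
      ← Real.rpow_mul h1t.le, ← mul_assoc, ← Real.rpow_neg (by positivity), ← Real.rpow_add h1t,
      show -μ / 2 + -(1 / 2 * -μ) = 0 by ring, Real.rpow_zero, one_mul]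
  have hy := hw (s⁻¹ • x) (smul_ne_zero (inv_ne_zero hs.ne') hx)
  rw [norm_smul, Real.norm_of_nonneg (inv_nonneg.2 hs.le)] at hy
  calc ‖selfSimilar μ w t x‖ = (1 - t) ^ (-μ / 2) * ‖w (s⁻¹ • x)‖ := by
        rw [selfSimilar, norm_mul, norm_mul, hphase, Complex.norm_real,
          Real.norm_of_nonneg (Real.rpow_nonneg h1t.le _), mul_one]
    _ ≤ (1 - t) ^ (-μ / 2) * (A * (s⁻¹ * ‖x‖) ^ (-μ)) := by gcongr
    _ = A * ‖x‖ ^ (-μ) := by rw [← hscale]; ring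

lemma norm_truncation_le_indicator {E : Type*} [NormedAddCommGroup E] {f : E → ℂ} {η : E → ℝ}
    {R t : ℝ} (ht : t ∈ Icc (0 : ℝ) 1) (hη01 : ∀ x, η x ∈ Icc (0 : ℝ) 1)
    (hηsupp : ∀ x, R ≤ ‖x‖ → η x = 0) (x : E) :
    ‖(t : ℂ) * f x * (η x : ℂ)‖ ≤ (ball 0 R).indicator (fun x ↦ ‖f x‖) x := by
  by_cases hx : x ∈ ball (0 : E) R
  · rw [indicator_of_mem hx, norm_mul, norm_mul, Complex.norm_real, Complex.norm_real,
      Real.norm_of_nonneg ht.1, Real.norm_of_nonneg (hη01 x).1]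
    exact (mul_le_of_le_one_right (by have := ht.1; positivity) (hη01 x).2).trans
      (mul_le_of_le_one_left (norm_nonneg _) ht.2)
  · rw [mem_ball_zero_iff, not_lt] at hx
    simpa [hηsupp x hx] using indicator_nonneg (fun _ _ ↦ norm_nonneg _) x

theorem uniform_L2_bound_truncated_general (d : ℕ) (μ : ℝ) (hμ : 0 < μ)
    (hμd : μ < (d : ℝ) / 2) (M C₀ : ℝ) (hM : 0 ≤ M)
    (w : EuclideanSpace ℝ (Fin d) → ℂ)
    (hwM : ∀ x, ‖x‖ ≤ 1 → ‖w x‖ ≤ M)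
    (hwdec : ∀ x : EuclideanSpace ℝ (Fin d), 1 ≤ ‖x‖ → ‖w x‖ ≤ C₀ * ‖x‖ ^ (-μ))
    (η : EuclideanSpace ℝ (Fin d) → ℝ) (hη01 : ∀ x, η x ∈ Icc (0 : ℝ) 1)
    (hηsupp : ∀ x : EuclideanSpace ℝ (Fin d), 2 ≤ ‖x‖ → η x = 0) :
    ∃ K : ℝ, ∀ t ∈ Ico (0 : ℝ) 1,
      (∫⁻ x, (‖(t : ℂ) * selfSimilar μ w t x * (η x : ℂ)‖₊ : ℝ≥0∞) ^ (2 : ℝ)) ^ (1 / (2 : ℝ))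
        ≤ ENNReal.ofReal K := by
  have hd : 1 ≤ Module.finrank ℝ (EuclideanSpace ℝ (Fin d)) := by
    rw [finrank_euclideanSpace_fin, Nat.one_le_iff_ne_zero]
    rintro rfl
    norm_num at hμd
    linarith
  have : Nontrivial (EuclideanSpace ℝ (Fin d)) := Module.nontrivial_of_finrank_pos hd
  set g := (ball (0 : EuclideanSpace ℝ (Fin d)) 2).indicator fun x ↦ max M C₀ * ‖x‖ ^ (-μ)
  have hg : MemLp g 2 volume :=
    memLp_two_indicator_ball_norm_rpow hd (by rw [finrank_euclideanSpace_fin]; linarith) _ _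
  refine ⟨(eLpNorm g 2 volume).toReal, fun t ht ↦ ?_⟩
  have hdom : ∀ᵐ x, ‖(t : ℂ) * selfSimilar μ w t x * (η x : ℂ)‖ ≤ g x := by
    -- `x = 0` is excluded because there `‖x‖ ^ (-μ)` takes the junk value `0`.
    filter_upwards [measure_eq_zero_iff_ae_notMem.1 (measure_singleton 0)] with x hx
    refine (norm_truncation_le_indicator (Ico_subset_Icc_self ht) hη01 hηsupp x).trans
      (indicator_le_indicator ?_)
    exact norm_selfSimilar_le (fun y hy ↦ norm_le_max_mul_norm_rpow hμ.le hM hwM hwdec hy)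
      ht.2 hx
  calc _ = eLpNorm (fun x ↦ (t : ℂ) * selfSimilar μ w t x * (η x : ℂ)) 2 volume := by
        rw [eLpNorm_eq_eLpNorm' two_ne_zero ENNReal.ofNat_ne_top, ENNReal.toReal_ofNat]
        rfl
    _ ≤ eLpNorm g 2 volume := eLpNorm_mono_ae_real hdom
    _ = _ := (ENNReal.ofReal_toReal hg.eLpNorm_ne_top).symm

/-- Uniform-in-time `L²` bound for the truncated solution `u(t,x) = t ζ(t,x) η(x)`, where `w`
is bounded on the unit ball and decays like `|x|^{-μ}` with `0 < μ < d/2`, and the cut-off `η`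
vanishes outside `B_2`. -/
theorem uniform_L2_bound_truncated (d : ℕ) (hd : 2 ≤ d) (μ : ℝ) (hμ : 0 < μ)
    (hμd : μ < (d : ℝ) / 2) (M C₀ : ℝ) (hM : 0 ≤ M) (hC₀ : 0 ≤ C₀)
    (w : EuclideanSpace ℝ (Fin d) → ℂ) (hw : Measurable w)
    (hwM : ∀ x, ‖x‖ ≤ 1 → ‖w x‖ ≤ M)
    (hwdec : ∀ x : EuclideanSpace ℝ (Fin d), 1 ≤ ‖x‖ → ‖w x‖ ≤ C₀ * ‖x‖ ^ (-μ))
    (η : EuclideanSpace ℝ (Fin d) → ℝ) (hη : Measurable η) (hη01 : ∀ x, η x ∈ Icc (0 : ℝ) 1)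
    (hηsupp : ∀ x : EuclideanSpace ℝ (Fin d), 2 ≤ ‖x‖ → η x = 0) :
    ∃ K : ℝ, ∀ t ∈ Ico (0 : ℝ) 1,
      (∫⁻ x, (‖(t : ℂ) * selfSimilar μ w t x * (η x : ℂ)‖₊ : ℝ≥0∞) ^ (2 : ℝ)) ^ (1 / (2 : ℝ))
        ≤ ENNReal.ofReal K :=
  uniform_L2_bound_truncated_general d μ hμ hμd M C₀ hM w hwM hwdec η hη01 hηsupp
end

section
/- Square integrability of the solution and its gradient (Step 2 of the counterexample): let d ≥ 2 and 0 < μ < d/2. Let w : ℝ^d → ℂ be Lipschitz, continuously differentiable on ℝ^d∖{0}, and suppose |w(x)| ≤ C₀|x|^{−μ} and |∇w(x)| ≤ C₁|x|^{−1−μ} for all |x| ≥ 1, for some C₀, C₁ ≥ 0. Let η : ℝ^d → ℝ be smooth with 0 ≤ η ≤ 1, η = 1 on B_1 and η = 0 outside B_2. Define u(t,x) = t (1−t)^{−μ/2} e^{−(i/2) log(1−t)} w(x/(1−t)^{1/2}) η(x) for t ∈ (0,1), x ∈ ℝ^d. Then ∫₀¹ ∫_{ℝ^d} (|u(t,x)|²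 + |∇_x u(t,x)|²) dx dt < ∞, where ∇_x u is the (classical, defined for x ≠ 0 and extended arbitrarily at x = 0) spatial gradient. -/
/-!
Write `u = t ζ η` with `ζ(t,x) = c(t) w(x / r)`, `r = (1-t)^{1/2}` and `|t c(t)| ≤ r^{-μ}`.
Interpolating between the Lipschitz bounds near the origin and the decay at infinity gives
`|w(y)| ≲ |y|^{-μ}` and `|∇w(y)| ≲ |y|^{-b}` for every `0 ≤ b ≤ 1 + μ`. The scaling then makes
`|u(t,x)| ≲ |x|^{-μ}` uniformly in `t`, while `|∇u(t,x)| ≲ |x|^{-μ} + (1-t)^{(b-1-μ)/2} |x|^{-b}`,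
both supported in `B_2`. Choosing `μ < b < d/2` makes `|x|^{-2μ}` and `|x|^{-2b}` integrable on `B_2`
and `(1-t)^{b-1-μ}` integrable on `(0,1)`.
-/

open MeasureTheory Set
open scoped ENNReal NNReal

theorem setLIntegral_lintegral_lt_top_of_le_add_mul {α β : Type*} [MeasurableSpace α]
    [MeasurableSpace β] {μ : Measure α} {ν : Measure β} {S : Set α} {F : α → β → ℝ≥0∞}
    {h : α → ℝ} {f₁ f₂ : β → ℝ} (hSm : MeasurableSet S) (hS : μ S < ∞)
    (hh : IntegrableOn h S μ) (hh0 : ∀ t ∈ S, 0 ≤ h t)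
    (hf₁ : Integrable f₁ ν) (hf₂ : Integrable f₂ ν)
    (hF : ∀ t ∈ S, ∀ᵐ x ∂ν, F t x ≤ ENNReal.ofReal (f₁ x + h t * f₂ x)) :
    ∫⁻ t in S, ∫⁻ x, F t x ∂ν ∂μ < ∞ := by
  set a := ∫⁻ x, ENNReal.ofReal (f₁ x) ∂ν
  set b := ∫⁻ x, ENNReal.ofReal (f₂ x) ∂ν
  have hinner : ∀ t ∈ S, ∫⁻ x, F t x ∂ν ≤ a + ENNReal.ofReal (h t) * b := fun t ht =>
    calc ∫⁻ x, F t x ∂ν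
        ≤ ∫⁻ x, ENNReal.ofReal (f₁ x) + ENNReal.ofReal (h t) * ENNReal.ofReal (f₂ x) ∂ν := by
          refine lintegral_mono_ae ((hF t ht).mono fun x hx => hx.trans ?_)
          rw [← ENNReal.ofReal_mul (hh0 t ht)]
          exact ENNReal.ofReal_add_le
      _ = a + ENNReal.ofReal (h t) * b := by
          rw [lintegral_add_left' hf₁.aemeasurable.ennreal_ofReal,
            lintegral_const_mul' _ _ ENNReal.ofReal_ne_top]
  calc ∫⁻ t in S, ∫⁻ x, F t x ∂ν ∂μ ≤ ∫⁻ t in S, a + ENNReal.ofReal (h t) * b ∂μ :=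
        setLIntegral_mono' hSm hinner
    _ = a * μ S + (∫⁻ t in S, ENNReal.ofReal (h t) ∂μ) * b := by
        rw [lintegral_add_left measurable_const, setLIntegral_const,
          lintegral_mul_const' _ _ hf₂.lintegral_lt_top.ne]
    _ < ∞ := ENNReal.add_lt_top.2 ⟨ENNReal.mul_lt_top hf₁.lintegral_lt_top hS,
        ENNReal.mul_lt_top hh.lintegral_lt_top hf₂.lintegral_lt_top⟩

theorem integrable_indicator_ball_mul_norm_rpow {E : Type*} [NormedAddCommGroup E]
    [NormedSpace ℝ E] [FiniteDimensional ℝ E] [MeasurableSpace E] [BorelSpace E]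
    {μ : Measure E} [μ.IsAddHaarMeasure] (hE : 1 ≤ Module.finrank ℝ E) {p : ℝ}
    (hp : p < Module.finrank ℝ E) (C r : ℝ) :
    Integrable ((Metric.ball 0 r).indicator fun x : E => C * ‖x‖ ^ (-p)) μ := by
  have h : IntegrableOn (fun x : E => ‖x‖ ^ (-p)) (Metric.ball 0 r) μ :=
    integrableOn_ball_of_norm_le_rpow (C := 1) hE hp
      (ae_of_all _ fun x => by rw [one_mul, Real.norm_of_nonneg (by positivity)])
      (measurable_norm.pow_const _).aestronglyMeasurable
  exact IntegrableOn.integrable_indicator (Integrable.const_mul h C) measurableSet_ball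

theorem integrableOn_Ioo_one_sub_rpow {γ : ℝ} (hγ : -1 < γ) :
    IntegrableOn (fun t : ℝ => (1 - t) ^ γ) (Ioo 0 1) := by
  have h :=
    ((intervalIntegral.intervalIntegrable_rpow' (a := 0) (b := 1) hγ).comp_sub_left 1).symm
  simp only [sub_zero, sub_self] at h
  exact (intervalIntegrable_iff_integrableOn_Ioo_of_le zero_le_one).1 h

theorem LipschitzWith.norm_le_add_of_norm_le_one {E F : Type*} [SeminormedAddCommGroup E]
    [SeminormedAddCommGroup F] {f : E → F} {L : ℝ≥0} (hf : LipschitzWith L f) {y : E}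
    (hy : ‖y‖ ≤ 1) : ‖f y‖ ≤ ‖f 0‖ + L := by
  have := hf.norm_sub_le y 0
  rw [sub_zero] at this
  calc ‖f y‖ ≤ ‖f 0‖ + ‖f y - f 0‖ := norm_le_insert' _ _
    _ ≤ ‖f 0‖ + L := by nlinarith [L.coe_nonneg, norm_nonneg y]

theorem norm_le_mul_rpow_neg_of_le_of_decay {E F : Type*} [NormedAddCommGroup E]
    [NormedAddCommGroup F] {f : E → F} {M C a b : ℝ} (ha : 0 ≤ a) (hab : a ≤ b) (hC : 0 ≤ C)
    (hsmall : ∀ y, ‖y‖ ≤ 1 → ‖f y‖ ≤ M) (hlarge : ∀ y, 1 ≤ ‖y‖ → ‖f y‖ ≤ C * ‖y‖ ^ (-b))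
    {y : E} (hy : y ≠ 0) : ‖f y‖ ≤ max M C * ‖y‖ ^ (-a) := by
  have hy0 : 0 < ‖y‖ := norm_pos_iff.2 hy
  have hMC : 0 ≤ max M C := hC.trans (le_max_right _ _)
  rcases le_total ‖y‖ 1 with hy1 | hy1
  · calc ‖f y‖ ≤ max M C := (hsmall y hy1).trans (le_max_left _ _)
      _ ≤ max M C * ‖y‖ ^ (-a) := le_mul_of_one_le_right hMC
          (Real.one_le_rpow_of_pos_of_le_one_of_nonpos hy0 hy1 (neg_nonpos.2 ha))
  · calc ‖f y‖ ≤ C * ‖y‖ ^ (-b) := hlarge y hy1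
      _ ≤ max M C * ‖y‖ ^ (-a) := mul_le_mul (le_max_right _ _)
          (Real.rpow_le_rpow_of_exponent_le hy1 (neg_le_neg hab)) (by positivity) hMC

theorem norm_comp_smul_le_of_le_rpow_neg {E F : Type*} [NormedAddCommGroup E] [NormedSpace ℝ E]
    [NormedAddCommGroup F] {f : E → F} {A a ρ : ℝ} (hf : ∀ y ≠ 0, ‖f y‖ ≤ A * ‖y‖ ^ (-a))
    (hρ : 0 < ρ) {x : E} (hx : x ≠ 0) : ‖f (ρ • x)‖ ≤ A * ρ ^ (-a) * ‖x‖ ^ (-a) := by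
  have := hf (ρ • x) (smul_ne_zero hρ.ne' hx)
  rwa [norm_smul, Real.norm_of_nonneg hρ.le, Real.mul_rpow hρ.le (norm_nonneg x),
    ← mul_assoc] at this

theorem norm_fderiv_mul_comp_smul_mul_le {E : Type*} [NormedAddCommGroup E] [NormedSpace ℝ E]
    {w : E → ℂ} {η : E → ℝ} {x : E} (c : ℂ) (ρ : ℝ) (hw : DifferentiableAt ℝ w (ρ • x))
    (hη : DifferentiableAt ℝ η x) :
    ‖fderiv ℝ (fun y => c * w (ρ • y) * (η y : ℂ)) x‖ ≤
      ‖c‖ * (‖w (ρ • x)‖ * ‖fderiv ℝ η x‖ + |ρ| * ‖fderiv ℝ w (ρ • x)‖ * |η x|) := by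
  have hW : HasFDerivAt (fun y => w (ρ • y))
      ((fderiv ℝ w (ρ • x)).comp (ρ • ContinuousLinearMap.id ℝ E)) x :=
    hw.hasFDerivAt.comp x ((hasFDerivAt_id x).const_smul ρ)
  have hηC : HasFDerivAt (fun y => (η y : ℂ)) (Complex.ofRealCLM.comp (fderiv ℝ η x)) x :=
    Complex.ofRealCLM.hasFDerivAt.comp x hη.hasFDerivAt
  have hscale : ‖(fderiv ℝ w (ρ • x)).comp (ρ • ContinuousLinearMap.id ℝ E)‖ ≤
      ‖fderiv ℝ w (ρ • x)‖ * |ρ| := by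
    refine (ContinuousLinearMap.opNorm_comp_le _ _).trans
      (mul_le_mul_of_nonneg_left ?_ (norm_nonneg _))
    refine (norm_smul_le (α := ℝ) (β := E →L[ℝ] E) _ _).trans ?_
    simpa using mul_le_mul_of_nonneg_left ContinuousLinearMap.norm_id_le (abs_nonneg ρ)
  have hcut : ‖Complex.ofRealCLM.comp (fderiv ℝ η x)‖ ≤ ‖fderiv ℝ η x‖ := by
    simpa [Complex.ofRealCLM_norm] using
      ContinuousLinearMap.opNorm_comp_le Complex.ofRealCLM (fderiv ℝ η x)
  have hU : HasFDerivAt (fun y => c * w (ρ • y) * (η y : ℂ)) _ x := (hW.const_mul c).mul hηC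
  rw [hU.fderiv]
  refine (norm_add_le _ _).trans ?_
  rw [norm_smul, norm_smul, norm_smul, norm_mul, Complex.norm_real, Real.norm_eq_abs]
  have := mul_le_mul_of_nonneg_left hcut (by positivity : 0 ≤ ‖c‖ * ‖w (ρ • x)‖)
  have := mul_le_mul_of_nonneg_left hscale (by positivity : 0 ≤ |η x| * ‖c‖)
  nlinarith

theorem sq_add_sq_le_of_le_mul_add {u v A B P Q σ e k K : ℝ} (hu0 : 0 ≤ u) (hv0 : 0 ≤ v)
    (he0 : 0 ≤ e) (he1 : e ≤ 1) (hk0 : 0 ≤ k) (hkK : k ≤ K) (hu : u ≤ A * P * e)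
    (hv : v ≤ A * P * k + B * σ * Q * e) :
    u ^ 2 + v ^ 2 ≤ A ^ 2 * (1 + 2 * K ^ 2) * P ^ 2 + σ ^ 2 * (2 * B ^ 2 * Q ^ 2) := by
  have he2 : e ^ 2 ≤ 1 := pow_le_one₀ he0 he1
  have hk2 : k ^ 2 ≤ K ^ 2 := pow_le_pow_left₀ hk0 hkK 2
  have hu2 : u ^ 2 ≤ (A * P) ^ 2 * e ^ 2 := by rw [← mul_pow]; exact pow_le_pow_left₀ hu0 hu 2
  have hv2 : v ^ 2 ≤ (A * P * k + B * σ * Q * e) ^ 2 := pow_le_pow_left₀ hv0 hv 2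
  nlinarith [sq_nonneg (A * P * k - B * σ * Q * e), sq_nonneg (A * P), sq_nonneg (B * σ * Q),
    mul_le_mul_of_nonneg_left hk2 (sq_nonneg (A * P)),
    mul_le_mul_of_nonneg_left he2 (sq_nonneg (A * P)),
    mul_le_mul_of_nonneg_left he2 (sq_nonneg (B * σ * Q))]

section ScaledProfile

variable {E : Type*} [NormedAddCommGroup E] [NormedSpace ℝ E] {w : E → ℂ} {η : E → ℝ}
  {c : ℂ} {ρ A B μ b : ℝ} {x : E}

theorem norm_mul_comp_smul_mul_le (hρ : 0 < ρ) (hc : ‖c‖ ≤ ρ ^ μ)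
    (hwA : ∀ y ≠ 0, ‖w y‖ ≤ A * ‖y‖ ^ (-μ)) (hx : x ≠ 0) :
    ‖c * w (ρ • x) * (η x : ℂ)‖ ≤ A * ‖x‖ ^ (-μ) * |η x| := by
  have hw := norm_comp_smul_le_of_le_rpow_neg hwA hρ hx
  have hρμ : ρ ^ μ * ρ ^ (-μ) = 1 := by
    rw [← Real.rpow_add hρ, add_neg_cancel, Real.rpow_zero]
  rw [norm_mul, norm_mul, Complex.norm_real, Real.norm_eq_abs]
  calc ‖c‖ * ‖w (ρ • x)‖ * |η x| ≤ ρ ^ μ * (A * ρ ^ (-μ) * ‖x‖ ^ (-μ)) * |η x| := by gcongr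
    _ = A * ‖x‖ ^ (-μ) * |η x| := by linear_combination (A * ‖x‖ ^ (-μ) * |η x|) * hρμ

theorem norm_fderiv_mul_comp_smul_mul_le_of_decay (hρ : 0 < ρ) (hc : ‖c‖ ≤ ρ ^ μ)
    (hwd : DifferentiableAt ℝ w (ρ • x)) (hηd : DifferentiableAt ℝ η x)
    (hwA : ∀ y ≠ 0, ‖w y‖ ≤ A * ‖y‖ ^ (-μ)) (hwB : ∀ y ≠ 0, ‖fderiv ℝ w y‖ ≤ B * ‖y‖ ^ (-b))
    (hx : x ≠ 0) :
    ‖fderiv ℝ (fun y => c * w (ρ • y) * (η y : ℂ)) x‖ ≤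
      A * ‖x‖ ^ (-μ) * ‖fderiv ℝ η x‖ + B * ρ ^ (1 + μ - b) * ‖x‖ ^ (-b) * |η x| := by
  have hw := norm_comp_smul_le_of_le_rpow_neg hwA hρ hx
  have hdw := norm_comp_smul_le_of_le_rpow_neg hwB hρ hx
  have hρμ : ρ ^ μ * ρ ^ (-μ) = 1 := by
    rw [← Real.rpow_add hρ, add_neg_cancel, Real.rpow_zero]
  have hρb : ρ ^ μ * ρ * ρ ^ (-b) = ρ ^ (1 + μ - b) := by
    rw [← Real.rpow_add_one hρ.ne', ← Real.rpow_add hρ]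
    ring_nf
  refine (norm_fderiv_mul_comp_smul_mul_le c ρ hwd hηd).trans ?_
  rw [abs_of_pos hρ]
  calc ‖c‖ * (‖w (ρ • x)‖ * ‖fderiv ℝ η x‖ + ρ * ‖fderiv ℝ w (ρ • x)‖ * |η x|)
      ≤ ρ ^ μ * ((A * ρ ^ (-μ) * ‖x‖ ^ (-μ)) * ‖fderiv ℝ η x‖
          + ρ * (B * ρ ^ (-b) * ‖x‖ ^ (-b)) * |η x|) := by gcongr
    _ = A * ‖x‖ ^ (-μ) * ‖fderiv ℝ η x‖ + B * ρ ^ (1 + μ - b) * ‖x‖ ^ (-b) * |η x| := by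
        rw [← hρb]
        linear_combination (A * ‖x‖ ^ (-μ) * ‖fderiv ℝ η x‖) * hρμ

theorem sq_norm_add_sq_norm_fderiv_mul_comp_smul_mul_le {K R : ℝ} (hρ : 0 < ρ)
    (hc : ‖c‖ ≤ ρ ^ μ) (hwd : DifferentiableAt ℝ w (ρ • x)) (hηd : DifferentiableAt ℝ η x)
    (hwA : ∀ y ≠ 0, ‖w y‖ ≤ A * ‖y‖ ^ (-μ)) (hwB : ∀ y ≠ 0, ‖fderiv ℝ w y‖ ≤ B * ‖y‖ ^ (-b))
    (hη1 : |η x| ≤ 1) (hηK : ‖fderiv ℝ η x‖ ≤ K) (hηR : R ≤ ‖x‖ → η x = 0 ∧ fderiv ℝ η x = 0)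
    (hx : x ≠ 0) :
    ‖c * w (ρ • x) * (η x : ℂ)‖ ^ 2 + ‖fderiv ℝ (fun y => c * w (ρ • y) * (η y : ℂ)) x‖ ^ 2 ≤
      (Metric.ball 0 R).indicator (fun y => A ^ 2 * (1 + 2 * K ^ 2) * ‖y‖ ^ (-(2 * μ))) x +
        ρ ^ (2 * (1 + μ - b)) *
          (Metric.ball 0 R).indicator (fun y => 2 * B ^ 2 * ‖y‖ ^ (-(2 * b))) x := by
  have hU := norm_mul_comp_smul_mul_le (η := η) hρ hc hwA hx
  have hD := norm_fderiv_mul_comp_smul_mul_le_of_decay hρ hc hwd hηd hwA hwB hx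
  by_cases hxR : ‖x‖ < R
  · have hmem : x ∈ Metric.ball 0 R := mem_ball_zero_iff.2 hxR
    rw [indicator_of_mem hmem, indicator_of_mem hmem]
    have hsq : ∀ z p : ℝ, 0 ≤ z → (z ^ p) ^ 2 = z ^ (2 * p) := fun z p hz => by
      rw [← Real.rpow_natCast, ← Real.rpow_mul hz]
      ring_nf
    have hP := hsq ‖x‖ (-μ) (norm_nonneg x)
    have hQ := hsq ‖x‖ (-b) (norm_nonneg x)
    have hσ := hsq ρ (1 + μ - b) hρ.le
    simp only [mul_neg] at hP hQ
    rw [← hP, ← hQ, ← hσ]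
    exact sq_add_sq_le_of_le_mul_add (norm_nonneg _) (norm_nonneg _) (abs_nonneg _) hη1
      (norm_nonneg _) hηK hU hD
  · obtain ⟨hη0, hηd0⟩ := hηR (not_lt.1 hxR)
    have hmem : x ∉ Metric.ball 0 R := fun h => hxR (mem_ball_zero_iff.1 h)
    rw [hηd0, hη0, norm_zero, abs_zero, mul_zero, mul_zero, add_zero] at hD
    rw [indicator_of_notMem hmem, indicator_of_notMem hmem, hη0, hD.antisymm (norm_nonneg _)]
    simp

end ScaledProfile

theorem ContDiff.exists_norm_fderiv_le_of_eq_zero_of_le_norm {E F : Type*}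
    [NormedAddCommGroup E] [NormedSpace ℝ E] [ProperSpace E] [NormedAddCommGroup F]
    [NormedSpace ℝ F] {η : E → F} {R : ℝ} (hη : ContDiff ℝ 1 η)
    (hηR : ∀ x, R ≤ ‖x‖ → η x = 0) : ∃ K, ∀ x, ‖fderiv ℝ η x‖ ≤ K :=
  (hη.continuous_fderiv one_ne_zero).bounded_above_of_compact_support <|
    HasCompactSupport.fderiv (𝕜 := ℝ) <| HasCompactSupport.intro (isCompact_closedBall 0 R)
      fun x hx => hηR x (le_of_lt (by simpa using hx))

noncomputable def selfSimilarFactor (μ t : ℝ) : ℂ :=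
  (((1 - t) ^ (-μ / 2) : ℝ) : ℂ) * Complex.exp (-(Complex.I / 2) * (Real.log (1 - t) : ℂ))

theorem selfSimilar_eq {d : ℕ} (μ : ℝ) (w : EuclideanSpace ℝ (Fin d) → ℂ) (t : ℝ)
    (x : EuclideanSpace ℝ (Fin d)) :
    selfSimilar μ w t x = selfSimilarFactor μ t * w (((1 - t) ^ ((1 : ℝ) / 2))⁻¹ • x) :=
  rfl

theorem rpow_one_div_two_inv_rpow {s : ℝ} (hs : 0 < s) (p : ℝ) :
    ((s ^ ((1 : ℝ) / 2))⁻¹) ^ p = s ^ (-p / 2) := by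
  rw [Real.inv_rpow (by positivity), ← Real.rpow_mul hs.le, ← Real.rpow_neg hs.le]
  ring_nf

theorem norm_selfSimilarFactor {μ t : ℝ} (ht : t < 1) :
    ‖selfSimilarFactor μ t‖ = ((1 - t) ^ ((1 : ℝ) / 2))⁻¹ ^ μ := by
  have hs : 0 < 1 - t := sub_pos.2 ht
  have hphase : ‖Complex.exp (-(Complex.I / 2) * (Real.log (1 - t) : ℂ))‖ = 1 := by
    rw [Complex.norm_exp]
    simp
  rw [selfSimilarFactor, norm_mul, hphase, mul_one, Complex.norm_real,
    Real.norm_of_nonneg (by positivity), rpow_one_div_two_inv_rpow hs, neg_div]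

theorem coe_nnnorm_rpow_two {G : Type*} [SeminormedAddCommGroup G] (z : G) :
    (‖z‖₊ : ℝ≥0∞) ^ (2 : ℝ) = ENNReal.ofReal (‖z‖ ^ 2) := by
  rw [ENNReal.rpow_two, ← coe_nnnorm, ← NNReal.coe_pow, ENNReal.ofReal_coe_nnreal,
    ENNReal.coe_pow]

theorem coe_nnnorm_sq_add_fderiv_sq_selfSimilar_mul_le {d : ℕ} {μ b A B K R t : ℝ}
    {w : EuclideanSpace ℝ (Fin d) → ℂ} {η : EuclideanSpace ℝ (Fin d) → ℝ}
    {x : EuclideanSpace ℝ (Fin d)} (ht : t ∈ Ioo 0 1)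
    (hwd : ∀ y ≠ 0, DifferentiableAt ℝ w y) (hηd : Differentiable ℝ η)
    (hwA : ∀ y ≠ 0, ‖w y‖ ≤ A * ‖y‖ ^ (-μ)) (hwB : ∀ y ≠ 0, ‖fderiv ℝ w y‖ ≤ B * ‖y‖ ^ (-b))
    (hη01 : ∀ x, η x ∈ Icc (0 : ℝ) 1) (hηK : ∀ x, ‖fderiv ℝ η x‖ ≤ K)
    (hηR : ∀ x, R ≤ ‖x‖ → η x = 0) (hx : x ≠ 0) :
    (‖(t : ℂ) * selfSimilar μ w t x * (η x : ℂ)‖₊ : ℝ≥0∞) ^ (2 : ℝ) +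
        (‖fderiv ℝ (fun y => (t : ℂ) * selfSimilar μ w t y * (η y : ℂ)) x‖₊ : ℝ≥0∞) ^ (2 : ℝ) ≤
      ENNReal.ofReal
        ((Metric.ball 0 R).indicator (fun y => A ^ 2 * (1 + 2 * K ^ 2) * ‖y‖ ^ (-(2 * μ))) x +
          (1 - t) ^ (b - 1 - μ) *
            (Metric.ball 0 R).indicator (fun y => 2 * B ^ 2 * ‖y‖ ^ (-(2 * b))) x) := by
  have hs : 0 < 1 - t := sub_pos.2 ht.2
  set ρ := ((1 - t) ^ ((1 : ℝ) / 2))⁻¹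
  have hρ : 0 < ρ := by positivity
  set c := (t : ℂ) * selfSimilarFactor μ t
  have hfun : (fun y => (t : ℂ) * selfSimilar μ w t y * (η y : ℂ)) =
      fun y => c * w (ρ • y) * (η y : ℂ) := by
    funext y
    rw [selfSimilar_eq]
    ring
  have hc : ‖c‖ ≤ ρ ^ μ := by
    rw [norm_mul, norm_selfSimilarFactor ht.2, Complex.norm_real, Real.norm_of_nonneg ht.1.le]
    exact mul_le_of_le_one_left (by positivity) ht.2.le
  have hρpow : ρ ^ (2 * (1 + μ - b)) = (1 - t) ^ (b - 1 - μ) := by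
    rw [rpow_one_div_two_inv_rpow hs]
    ring_nf
  have hη1 : |η x| ≤ 1 := abs_le.2 ⟨by linarith [(hη01 x).1], (hη01 x).2⟩
  have hηR' : R ≤ ‖x‖ → η x = 0 ∧ fderiv ℝ η x = 0 := fun hxR =>
    ⟨hηR x hxR, IsLocalMin.fderiv_eq_zero <| .of_forall fun y => hηR x hxR ▸ (hη01 y).1⟩
  have key := sq_norm_add_sq_norm_fderiv_mul_comp_smul_mul_le hρ hc
    (hwd _ (smul_ne_zero hρ.ne' hx)) (hηd x) hwA hwB hη1 (hηK x) hηR' hx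
  rw [show (t : ℂ) * selfSimilar μ w t x * (η x : ℂ) = c * w (ρ • x) * (η x : ℂ) from
    congrFun hfun x, hfun, coe_nnnorm_rpow_two, coe_nnnorm_rpow_two,
    ← ENNReal.ofReal_add (by positivity) (by positivity), ← hρpow]
  exact ENNReal.ofReal_le_ofReal key

theorem solution_and_gradient_square_integrable_general (d : ℕ) (μ : ℝ) (hμ : 0 < μ)
    (hμd : μ < (d : ℝ) / 2) (C₀ C₁ : ℝ) (hC₀ : 0 ≤ C₀) (hC₁ : 0 ≤ C₁)
    (w : EuclideanSpace ℝ (Fin d) → ℂ)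
    (hwLip : ∃ L : ℝ, 0 ≤ L ∧ ∀ x y, ‖w x - w y‖ ≤ L * ‖x - y‖)
    (hwC1 : ContDiffOn ℝ 1 w ({0}ᶜ : Set (EuclideanSpace ℝ (Fin d))))
    (hwdec : ∀ x : EuclideanSpace ℝ (Fin d), 1 ≤ ‖x‖ → ‖w x‖ ≤ C₀ * ‖x‖ ^ (-μ))
    (hgraddec : ∀ x : EuclideanSpace ℝ (Fin d), 1 ≤ ‖x‖ →
      ‖fderiv ℝ w x‖ ≤ C₁ * ‖x‖ ^ (-1 - μ))
    (η : EuclideanSpace ℝ (Fin d) → ℝ) (hη : ContDiff ℝ (⊤ : ℕ∞) η)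
    (hη01 : ∀ x, η x ∈ Icc (0 : ℝ) 1)
    (hη0 : ∀ x : EuclideanSpace ℝ (Fin d), 2 ≤ ‖x‖ → η x = 0) :
    (∫⁻ t in Ioo (0 : ℝ) 1, ∫⁻ x,
        ((‖(t : ℂ) * selfSimilar μ w t x * (η x : ℂ)‖₊ : ℝ≥0∞) ^ (2 : ℝ) +
          (‖fderiv ℝ (fun y => (t : ℂ) * selfSimilar μ w t y * (η y : ℂ)) x‖₊ : ℝ≥0∞) ^ (2 : ℝ)))
      < ∞ := by
  obtain ⟨L, hL0, hLw⟩ := hwLip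
  have hwL : LipschitzWith ⟨L, hL0⟩ w := LipschitzWith.of_dist_le_mul fun x y => by
    rw [dist_eq_norm, dist_eq_norm]
    exact hLw x y
  have hE : 1 ≤ Module.finrank ℝ (EuclideanSpace ℝ (Fin d)) := by
    rw [finrank_euclideanSpace_fin]
    exact Nat.cast_pos.1 (by linarith : (0 : ℝ) < d)
  have : Nontrivial (EuclideanSpace ℝ (Fin d)) := Module.nontrivial_of_finrank_pos hE
  set b := min (1 + μ) ((μ + d / 2) / 2)
  have hbμ : μ < b := lt_min (by linarith) (by linarith)
  have hbd : 2 * b < d := by linarith [min_le_right (1 + μ) ((μ + d / 2) / 2)]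
  have hwA : ∀ y ≠ 0, ‖w y‖ ≤ max (‖w 0‖ + L) C₀ * ‖y‖ ^ (-μ) :=
    fun y hy => norm_le_mul_rpow_neg_of_le_of_decay hμ.le le_rfl hC₀
      (fun y hy => hwL.norm_le_add_of_norm_le_one hy) hwdec hy
  have hwB : ∀ y ≠ 0, ‖fderiv ℝ w y‖ ≤ max L C₁ * ‖y‖ ^ (-b) :=
    fun y hy => norm_le_mul_rpow_neg_of_le_of_decay (f := fderiv ℝ w) (by linarith)
      (min_le_left _ _) hC₁ (fun y _ => norm_fderiv_le_of_lipschitz ℝ hwL)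
      (fun y hy => by rw [neg_add']; exact hgraddec y hy) hy
  obtain ⟨K, hK⟩ := (hη.of_le (by simp)).exists_norm_fderiv_le_of_eq_zero_of_le_norm hη0
  have hF := fun t (ht : t ∈ Ioo (0 : ℝ) 1) => (Measure.ae_ne volume 0).mono fun x hx =>
    coe_nnnorm_sq_add_fderiv_sq_selfSimilar_mul_le ht
      (fun y hy => (hwC1.differentiableOn one_ne_zero).differentiableAt
        (isOpen_compl_singleton.mem_nhds hy))
      (hη.differentiable (by simp)) hwA hwB hη01 hK hη0 hx
  exact setLIntegral_lintegral_lt_top_of_le_add_mul measurableSet_Ioo (by simp)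
    (integrableOn_Ioo_one_sub_rpow (by linarith)) (fun t ht => by have := ht.2; positivity)
    (integrable_indicator_ball_mul_norm_rpow hE (by rw [finrank_euclideanSpace_fin]; linarith) _ _)
    (integrable_indicator_ball_mul_norm_rpow hE (by rw [finrank_euclideanSpace_fin]; linarith) _ _)
    hF

/-- Square integrability of the truncated solution `u(t,x) = t ζ(t,x) η(x)` together with its
spatial gradient, for a Lipschitz profile `w` that is `C¹` away from the origin and decays like
`|x|^{-μ}` (with gradient decay `|x|^{-1-μ}`), where `0 < μ < d/2`. -/
theorem solution_and_gradient_square_integrable (d : ℕ) (hd : 2 ≤ d) (μ : ℝ) (hμ : 0 < μ)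
    (hμd : μ < (d : ℝ) / 2) (C₀ C₁ : ℝ) (hC₀ : 0 ≤ C₀) (hC₁ : 0 ≤ C₁)
    (w : EuclideanSpace ℝ (Fin d) → ℂ)
    (hwLip : ∃ L : ℝ, 0 ≤ L ∧ ∀ x y, ‖w x - w y‖ ≤ L * ‖x - y‖)
    (hwC1 : ContDiffOn ℝ 1 w ({0}ᶜ : Set (EuclideanSpace ℝ (Fin d))))
    (hwdec : ∀ x : EuclideanSpace ℝ (Fin d), 1 ≤ ‖x‖ → ‖w x‖ ≤ C₀ * ‖x‖ ^ (-μ))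
    (hgraddec : ∀ x : EuclideanSpace ℝ (Fin d), 1 ≤ ‖x‖ →
      ‖fderiv ℝ w x‖ ≤ C₁ * ‖x‖ ^ (-1 - μ))
    (η : EuclideanSpace ℝ (Fin d) → ℝ) (hη : ContDiff ℝ (⊤ : ℕ∞) η)
    (hη01 : ∀ x, η x ∈ Icc (0 : ℝ) 1)
    (hη1 : ∀ x ∈ Metric.ball (0 : EuclideanSpace ℝ (Fin d)) 1, η x = 1)
    (hη0 : ∀ x : EuclideanSpace ℝ (Fin d), 2 ≤ ‖x‖ → η x = 0) :
    (∫⁻ t in Ioo (0 : ℝ) 1, ∫⁻ x,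
        ((‖(t : ℂ) * selfSimilar μ w t x * (η x : ℂ)‖₊ : ℝ≥0∞) ^ (2 : ℝ) +
          (‖fderiv ℝ (fun y => (t : ℂ) * selfSimilar μ w t y * (η y : ℂ)) x‖₊ : ℝ≥0∞) ^ (2 : ℝ)))
      < ∞ :=
  solution_and_gradient_square_integrable_general d μ hμ hμd C₀ C₁ hC₀ hC₁ w hwLip hwC1 hwdec
    hgraddec η hη hη01 hη0
end
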